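/- arXiv:2012.10587 — 2 statements merged into one kernel-verified Lean document; each statement's English description precedes it below -/
import Mathlib

section
/- Suppose r is a positive integer, N is a positive integer, χ is a Dirichlet character modulo N, and k ∈ (1/2)ℤ. If M_k(N, χν_η^r) ≠ {0}, then 2k − r ≡ 1 − χ(−1) (mod 4). In particular, if gcd(r, 6) = 1 and M_k(N, χν_η^r) ≠ {0}, then k is not an integer. -/
open Complex UpperHalfPlane CongruenceSubgroup Matrix NumberField
open scoped Manifold MatrixGroups Real

noncomputable section

abbrev SL2Z := Matrix.SpecialLinearGroup (Fin 2) ℤ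

/-- The automorphy denominator `c z + d` for `γ = (a b; c d)`. -/
def sldenom (γ : SL2Z) (z : ℍ) : ℂ := ((γ 1 0 : ℤ) : ℂ) * (z : ℂ) + ((γ 1 1 : ℤ) : ℂ)

/-- `q^{n/24} = e^{2π i n z/24}`. -/
def q24 (n : ℕ) (z : ℍ) : ℂ := Complex.exp (2 * Real.pi * Complex.I * (n : ℂ) * (z : ℂ) / 24)

/-- The Dedekind eta function `η(z) = q^{1/24} ∏_{n≥1} (1 - qⁿ)`. -/
def dedekindEta (z : ℍ) : ℂ :=
  Complex.exp (Real.pi * Complex.I * (z : ℂ) / 12) *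
    ∏' n : ℕ, (1 - Complex.exp (2 * Real.pi * Complex.I * ((n : ℂ) + 1) * (z : ℂ)))

/-- The Jacobi theta function `θ(z) = Σ_{n ∈ ℤ} q^{n²}`. -/
def theta (z : ℍ) : ℂ := ∑' n : ℤ, Complex.exp (2 * Real.pi * Complex.I * ((n : ℂ)) ^ 2 * (z : ℂ))

/-- The eta multiplier `ν_η`, characterized by
`η(γz) = ν_η(γ) (cz+d)^{1/2} η(z)` (principal branch); we evaluate at `z = i`. -/
def nuEta (γ : SL2Z) : ℂ :=
  dedekindEta (γ • UpperHalfPlane.I) / (sldenom γ UpperHalfPlane.I ^ ((1 : ℂ) / 2) * dedekindEta UpperHalfPlane.I)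

/-- The theta multiplier `ν_θ`, characterized by
`θ(γz) = ν_θ(γ) (cz+d)^{1/2} θ(z)` (principal branch) for `γ ∈ Γ₀(4)`. -/
def nuTheta (γ : SL2Z) : ℂ :=
  theta (γ • UpperHalfPlane.I) /
    (sldenom γ UpperHalfPlane.I ^ ((1 : ℂ) / 2) * theta UpperHalfPlane.I)

/-- The Kronecker symbol `(12/n)`. -/
def kron12 (n : ℤ) : ℤ :=
  if n % 12 = 1 ∨ n % 12 = 11 then 1 else if n % 12 = 5 ∨ n % 12 = 7 then -1 else 0

/-- Holomorphic modular forms of (possibly half-integral) weight `k`, level `Γ₀(N)` and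
multiplier system `ν`: holomorphy, transformation, and boundedness at all cusps. -/
def IsModForm (N : ℕ) (k : ℝ) (ν : SL2Z → ℂ) (f : ℍ → ℂ) : Prop :=
  MDifferentiable 𝓘(ℂ) 𝓘(ℂ) f ∧
  (∀ γ ∈ Gamma0 N, ∀ z : ℍ, f (γ • z) = ν γ * sldenom γ z ^ (k : ℂ) * f z) ∧
  ∀ γ : SL2Z, IsBoundedAtImInfty fun z => sldenom γ z ^ (-(k : ℂ)) * f (γ • z)

/-- Cusp forms of (possibly half-integral) weight `k`, level `Γ₀(N)` and multiplier `ν`. -/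
def IsCuspForm (N : ℕ) (k : ℝ) (ν : SL2Z → ℂ) (f : ℍ → ℂ) : Prop :=
  MDifferentiable 𝓘(ℂ) 𝓘(ℂ) f ∧
  (∀ γ ∈ Gamma0 N, ∀ z : ℍ, f (γ • z) = ν γ * sldenom γ z ^ (k : ℂ) * f z) ∧
  ∀ γ : SL2Z, IsZeroAtImInfty fun z => sldenom γ z ^ (-(k : ℂ)) * f (γ • z)

/-- Weakly holomorphic modular forms: meromorphic at the cusps. -/
def IsWeakModForm (N : ℕ) (k : ℝ) (ν : SL2Z → ℂ) (f : ℍ → ℂ) : Prop :=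
  MDifferentiable 𝓘(ℂ) 𝓘(ℂ) f ∧
  (∀ γ ∈ Gamma0 N, ∀ z : ℍ, f (γ • z) = ν γ * sldenom γ z ^ (k : ℂ) * f z) ∧
  ∀ γ : SL2Z, ∃ m : ℕ, IsBoundedAtImInfty fun z =>
    q24 m z * (sldenom γ z ^ (-(k : ℂ)) * f (γ • z))

/-- `x ∈ K` is `v`-integral: it is a quotient `a/b` with `a, b ∈ 𝓞 K`, `b ∉ v`. -/
def VInt {K : Type*} [Field K] [NumberField K] (v : Ideal (𝓞 K)) (x : K) : Prop :=
  ∃ a b : 𝓞 K, b ∉ v ∧ (b : K) * x = (a : K)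

/-- Congruence modulo `v` in the ring of `v`-integral elements of `K`. -/
def VCong {K : Type*} [Field K] [NumberField K] (v : Ideal (𝓞 K)) (x y : K) : Prop :=
  ∃ a b : 𝓞 K, b ∉ v ∧ a ∈ v ∧ (b : K) * (x - y) = (a : K)

/-- The point `24 z` of the upper half-plane. -/
def smul24 (z : ℍ) : ℍ := ⟨24 * (z : ℂ), by
  have := z.2
  simp only [Complex.mul_im]
  norm_num
  simpa using this⟩

/-- Horizontal translation `z ↦ z + x` on the upper half-plane. -/
def hshift (x : ℝ) (z : ℍ) : ℍ := ⟨(z : ℂ) + (x : ℂ), by simpa using z.2⟩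

/-- `ε_p`: `1` if `p ≡ 1 (mod 4)`, `i` if `p ≡ 3 (mod 4)`. -/
def epsP (p : ℕ) : ℂ := if p % 4 = 1 then 1 else Complex.I

/-!
The element `-1` lies in every `Γ₀(N)`, fixes every point of `ℍ` and has automorphy factor
`cz + d = -1`. Evaluated at a point where `f` does not vanish, the transformation law under `-1`
therefore reads `χ(-1) ν_η(-1)^r (-1)^k = 1`. Since `η` has no zeros, `ν_η(-1) = 1/(-1)^{1/2} = -i`,
and for the principal branch `(-1)^k = i^{2k}`; hence `i^{2k-r} = χ(-1) = i^{1-χ(-1)}`, which is the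
congruence modulo `4`. For integral `k` both `2k` and `1 - χ(-1)` are even, so `r` is even.
-/
theorem dedekindEta_eq_eta (z : ℍ) : dedekindEta z = ModularForm.eta z := by
  simp only [dedekindEta, ModularForm.eta, Function.Periodic.qParam, ModularForm.eta_q_eq_cexp]
  congr 2
  push_cast
  ring

theorem dedekindEta_ne_zero (z : ℍ) : dedekindEta z ≠ 0 :=
  dedekindEta_eq_eta z ▸ ModularForm.eta_ne_zero z.2

theorem neg_one_cpow_int_div_two (j : ℤ) : (-1 : ℂ) ^ ((j : ℂ) / 2) = Complex.I ^ j := by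
  rw [cpow_def_of_ne_zero (by norm_num), log_neg_one,
    show (π : ℂ) * Complex.I * (j / 2) = j * (π / 2 * Complex.I) by ring, exp_int_mul,
    exp_pi_div_two_mul_I]

theorem I_zpow_eq_I_zpow_iff {a b : ℤ} : Complex.I ^ a = Complex.I ^ b ↔ a ≡ b [ZMOD 4] := by
  have h := isPrimitiveRoot_I.zpow_eq_one_iff_dvd (a - b)
  rw [zpow_sub₀ I_ne_zero, div_eq_one_iff_eq (zpow_ne_zero _ I_ne_zero)] at h
  rw [h, Int.modEq_comm, Int.modEq_iff_dvd, Nat.cast_ofNat]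

theorem SL2Z_neg_one_smul (z : ℍ) : (-1 : SL2Z) • z = z := by
  rw [ModularGroup.SL_neg_smul, one_smul]

theorem sldenom_neg_one (z : ℍ) : sldenom (-1) z = -1 := by
  simp [sldenom]

theorem nuEta_neg_one : nuEta (-1) = -Complex.I := by
  have h := neg_one_cpow_int_div_two 1
  rw [Int.cast_one, zpow_one] at h
  rw [nuEta, SL2Z_neg_one_smul, sldenom_neg_one, h, div_mul_cancel_right₀ (dedekindEta_ne_zero _),
    inv_I]

theorem IsModForm.apply_neg_one_mul_neg_one_cpow {N : ℕ} {k : ℝ} {ν : SL2Z → ℂ} {f : ℍ → ℂ}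
    (hf : IsModForm N k ν f) (hf0 : f ≠ 0) : ν (-1) * (-1 : ℂ) ^ (k : ℂ) = 1 := by
  obtain ⟨z, hz⟩ := Function.ne_iff.mp hf0
  have := hf.2.1 (-1) (by simp [Gamma0_mem]) z
  rw [SL2Z_neg_one_smul, sldenom_neg_one] at this
  exact (mul_eq_right₀ hz).mp this.symm

theorem DirichletCharacter.exists_int_eq_apply_neg_one {N : ℕ} (χ : DirichletCharacter ℂ N) :
    ∃ c : ℤ, (c = 1 ∨ c = -1) ∧ (c : ℂ) = χ (-1) := by
  rcases χ.even_or_odd with h | h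
  · exact ⟨1, .inl rfl, by rw [h, Int.cast_one]⟩
  · exact ⟨-1, .inr rfl, by rw [h, Int.cast_neg, Int.cast_one]⟩

theorem intCast_eq_I_zpow_one_sub {c : ℤ} (hc : c = 1 ∨ c = -1) :
    (c : ℂ) = Complex.I ^ (1 - c) := by
  rcases hc with rfl | rfl <;> norm_num [zpow_two]

theorem I_zpow_sub_natCast (j : ℤ) (r : ℕ) :
    Complex.I ^ (j - r) = (-Complex.I) ^ r * Complex.I ^ j := by
  rw [zpow_sub₀ I_ne_zero, ← inv_I, inv_pow, zpow_natCast, div_eq_inv_mul]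

theorem stmt3_general (r : ℕ)
    (N : ℕ) (χ : DirichletCharacter ℂ N)
    (k : ℝ) (j : ℤ) (hk : 2 * k = (j : ℝ))
    (hne : ∃ f : ℍ → ℂ,
      IsModForm N k (fun γ => χ ((γ 1 1 : ℤ) : ZMod N) * nuEta γ ^ r) f ∧ f ≠ 0) :
    (∃ c : ℤ, (c : ℂ) = χ (-1) ∧ j - r ≡ 1 - c [ZMOD 4]) ∧
    (Nat.gcd r 6 = 1 → ∀ i : ℤ, k ≠ (i : ℝ)) := by
  obtain ⟨f, hf, hf0⟩ := hne
  obtain ⟨c, hc, hχ⟩ := χ.exists_int_eq_apply_neg_one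
  have hkj : (k : ℂ) = (j : ℂ) / 2 := by
    rw [eq_div_iff two_ne_zero, mul_comm]; exact_mod_cast hk
  have hν : (c : ℂ) * ((-Complex.I) ^ r * Complex.I ^ j) = 1 := by
    have h := hf.apply_neg_one_mul_neg_one_cpow hf0
    simpa [hχ, hkj, neg_one_cpow_int_div_two, nuEta_neg_one, mul_assoc] using h
  have hc2 : (c : ℂ) * c = 1 := by rcases hc with rfl | rfl <;> norm_num
  have hmod : j - r ≡ 1 - c [ZMOD 4] := by
    rw [← I_zpow_eq_I_zpow_iff, ← intCast_eq_I_zpow_one_sub hc, I_zpow_sub_natCast]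
    linear_combination (c : ℂ) * hν - (-Complex.I) ^ r * Complex.I ^ j * hc2
  refine ⟨⟨c, hχ, hmod⟩, fun hgcd i hki => ?_⟩
  have hj : j = 2 * i := by
    have : (j : ℝ) = ((2 * i : ℤ) : ℝ) := by rw [← hk, hki]; push_cast; ring
    exact_mod_cast this
  have hr : Odd r := (Nat.Coprime.coprime_dvd_right (by norm_num) hgcd).odd_of_right
  rw [Int.ModEq] at hmod
  obtain ⟨m, rfl⟩ := hr
  omega

/-- if `M_k(N, χ ν_η^r) ≠ {0}` then `2k - r ≡ 1 - χ(-1) (mod 4)`;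
in particular if `(r,6) = 1` then `k ∉ ℤ`. -/
theorem stmt3 (r : ℕ) (hr0 : 0 < r)
    (N : ℕ) (hN : 0 < N) (χ : DirichletCharacter ℂ N)
    (k : ℝ) (j : ℤ) (hk : 2 * k = (j : ℝ))
    (hne : ∃ f : ℍ → ℂ,
      IsModForm N k (fun γ => χ ((γ 1 1 : ℤ) : ZMod N) * nuEta γ ^ r) f ∧ f ≠ 0) :
    (∃ c : ℤ, (c : ℂ) = χ (-1) ∧ j - r ≡ 1 - c [ZMOD 4]) ∧
    (Nat.gcd r 6 = 1 → ∀ i : ℤ, k ≠ (i : ℝ)) :=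
  stmt3_general r N χ k j hk hne
end
end

section
/- Let ℓ ≥ 5 be prime, K a number field, v a prime of K above ℓ with ring of v-integral elements O_v. Let λ̄ ≥ 0 be an integer and let p ≥ 5 be prime with p ≢ 0, 1 (mod ℓ). Suppose (c(n))_{n≥1} is a sequence in O_v, with the convention c(x) = 0 when x is not a positive integer, such that for every positive integer n with gcd(n, 6) = 1 one has c(n²p²) + p^{λ̄+1}(12n²/p) c(n²) + p^{2λ̄+3} c(n²/p²) ≡ (12/p)(p^{λ̄+2} + p^{λ̄+1}) c(n²) (mod v). Then for every positive integer n₀ with gcd(n₀, 6) = 1 and p ∤ n₀, and every integer a ≥ 0, one has c(p^{2a} n₀²) ≡ (12/p)^a p^{a(λ̄+2)} c(n₀²) (mod v). -/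
open Complex UpperHalfPlane CongruenceSubgroup Matrix NumberField
open scoped Manifold MatrixGroups Real

noncomputable section

/-!
Put `x a = c(p^{2a} n₀²)`. The recursion at `n = p^{a+1} n₀` (where the symbol `(12n²/p)`
vanishes) says that `x` satisfies, modulo `v`, the two-step linear recurrence with characteristic
roots `α = (12/p) p^{λ̄+2}` and `β = (12/p) p^{λ̄+1}`, since `αβ = p^{2λ̄+3}` by `(12/p)² = 1`.
At `n = n₀` it says `x 1 ≡ α x 0`, i.e. the initial values lie on the `α`-eigenline, so
`x a ≡ αᵃ x 0` for all `a`.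
-/

theorem sub_pow_mul_mem_of_recurrence {R : Type*} [CommRing R] (I : AddSubgroup R) (α β : ℤ)
    (x : ℕ → R) (h₁ : x 1 - α * x 0 ∈ I)
    (hrec : ∀ a, x (a + 2) - (α + β) * x (a + 1) + α * β * x a ∈ I) (a : ℕ) :
    x a - α ^ a * x 0 ∈ I := by
  let e : ℕ → R := fun a => x a - α ^ a * x 0
  have he : ∀ a, e a ∈ I ∧ e (a + 1) ∈ I := by
    intro a
    induction a with
    | zero => simpa [e] using h₁
    | succ a ih =>
      refine ⟨ih.2, ?_⟩
      have h : e (a + 2) = (x (a + 2) - (α + β) * x (a + 1) + α * β * x a) +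
          (α + β) • e (a + 1) - (α * β) • e a := by
        simp only [e, zsmul_eq_mul]
        push_cast
        ring
      rw [h]
      exact I.sub_mem (I.add_mem (hrec a) (I.zsmul_mem ih.2 _)) (I.zsmul_mem ih.1 _)
  exact (he a).1

section VCong

variable {K : Type*} [Field K] [NumberField K] (v : Ideal (𝓞 K)) [v.IsPrime]

/-- The maximal ideal of the localization `(𝓞 K)_v`, as an additive subgroup of `K`. -/
def vZero : AddSubgroup K where
  carrier := {x | ∃ a b : 𝓞 K, b ∉ v ∧ a ∈ v ∧ (b : K) * x = a}
  zero_mem' := ⟨0, 1, (Ideal.ne_top_iff_one v).1 Ideal.IsPrime.ne_top', v.zero_mem, by simp⟩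
  add_mem' := by
    rintro x y ⟨a₁, b₁, hb₁, ha₁, e₁⟩ ⟨a₂, b₂, hb₂, ha₂, e₂⟩
    refine ⟨b₂ * a₁ + b₁ * a₂, b₁ * b₂, Ideal.IsPrime.mul_notMem ‹_› hb₁ hb₂,
      v.add_mem (v.mul_mem_left _ ha₁) (v.mul_mem_left _ ha₂), ?_⟩
    push_cast
    linear_combination (b₂ : K) * e₁ + (b₁ : K) * e₂
  neg_mem' := by
    rintro x ⟨a, b, hb, ha, e⟩
    exact ⟨-a, b, hb, v.neg_mem_iff.2 ha, by push_cast; linear_combination -e⟩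

theorem vCong_iff_sub_mem {x y : K} : VCong v x y ↔ x - y ∈ vZero v := Iff.rfl

end VCong

theorem Nat.mod_six_of_coprime_six {b : ℕ} (hb : b.Coprime 6) : b % 6 = 1 ∨ b % 6 = 5 := by
  have h : Nat.gcd (b % 6) 6 = 1 := by rw [← Nat.gcd_rec]; exact hb.symm
  have : b % 6 < 6 := Nat.mod_lt _ (by norm_num)
  interval_cases hr : b % 6 <;> simp_all

theorem Nat.Prime.coprime_six {p : ℕ} (hp : p.Prime) (hp5 : 5 ≤ p) : p.Coprime 6 := by
  have h2 := (Nat.coprime_primes hp Nat.prime_two).2 (by omega)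
  have h3 := (Nat.coprime_primes hp Nat.prime_three).2 (by omega)
  exact Nat.Coprime.mul_right h2 h3

theorem kron12_sq_of_coprime_six {b : ℕ} (hb : b.Coprime 6) : kron12 b ^ 2 = 1 := by
  have := Nat.mod_six_of_coprime_six hb
  have h12 : (b : ℤ) % 12 = 1 ∨ (b : ℤ) % 12 = 5 ∨ (b : ℤ) % 12 = 7 ∨ (b : ℤ) % 12 = 11 := by
    omega
  unfold kron12
  rcases h12 with h | h | h | h <;> simp [h]

theorem jacobiSym_twelve_of_coprime_six {b : ℕ} (hb : b.Coprime 6) :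
    jacobiSym 12 b = kron12 b := by
  have h6 := Nat.mod_six_of_coprime_six hb
  rw [jacobiSym.mod_right 12 (Nat.odd_iff.2 (by omega)), show 4 * Int.natAbs 12 = 48 from rfl]
  have h48 : kron12 b = kron12 (b % 48 : ℕ) := by unfold kron12; omega
  rw [h48]
  have hr : b % 48 < 48 := Nat.mod_lt _ (by norm_num)
  have hr6 : b % 48 % 6 = 1 ∨ b % 48 % 6 = 5 := by omega
  generalize b % 48 = r at hr hr6 ⊢
  interval_cases r <;> first | omega | norm_num [kron12]

theorem jacobiSym_twelve_mul_sq_of_not_dvd {p n : ℕ} (hp : p.Prime) (hp6 : p.Coprime 6)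
    (hpn : ¬p ∣ n) : jacobiSym (12 * (n : ℤ) ^ 2) p = kron12 p := by
  have hnp : Int.gcd n p = 1 := by
    rw [Int.gcd_natCast_natCast]; exact (hp.coprime_iff_not_dvd.2 hpn).symm
  rw [jacobiSym.mul_left, jacobiSym.sq_one' hnp, mul_one, jacobiSym_twelve_of_coprime_six hp6]

theorem jacobiSym_twelve_mul_sq_of_dvd {p n : ℕ} (hp : p.Prime) (hpn : p ∣ n) :
    jacobiSym (12 * (n : ℤ) ^ 2) p = 0 := by
  have h : (p : ℤ) ∣ 12 * (n : ℤ) ^ 2 :=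
    dvd_mul_of_dvd_right (dvd_pow (Int.natCast_dvd_natCast.2 hpn) two_ne_zero) _
  rw [jacobiSym.mod_left, Int.emod_eq_zero_of_dvd h, jacobiSym.zero_left hp.one_lt]

theorem stmt15_general
    {K : Type*} [Field K] [NumberField K]
    (v : Ideal (𝓞 K)) (hv : v.IsMaximal)
    (lamb : ℕ) (p : ℕ) (hp : p.Prime) (hp5 : 5 ≤ p)
    (c : ℕ → K)
    (hrec : ∀ n : ℕ, 1 ≤ n → Nat.gcd n 6 = 1 →
      VCong v
        (c (n ^ 2 * p ^ 2) +
          (p : K) ^ (lamb + 1) * ((jacobiSym (12 * (n : ℤ) ^ 2) p : ℤ) : K) * c (n ^ 2) +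
          (p : K) ^ (2 * lamb + 3) * (if p ∣ n then c ((n / p) ^ 2) else 0))
        (((kron12 (p : ℤ) : ℤ) : K) * ((p : K) ^ (lamb + 2) + (p : K) ^ (lamb + 1)) *
          c (n ^ 2))) :
    ∀ n₀ : ℕ, 1 ≤ n₀ → Nat.gcd n₀ 6 = 1 → ¬ p ∣ n₀ → ∀ a : ℕ,
      VCong v (c (p ^ (2 * a) * n₀ ^ 2))
        (((kron12 (p : ℤ) : ℤ) : K) ^ a * (p : K) ^ (a * (lamb + 2)) * c (n₀ ^ 2)) := by
  intro n₀ hn₀ hn₀6 hpn₀ a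
  have hp6 := hp.coprime_six hp5
  have hκ : ((kron12 p : ℤ) : K) ^ 2 = 1 := by exact_mod_cast kron12_sq_of_coprime_six hp6
  set κ := kron12 p with hκdef
  set x : ℕ → K := fun a => c (p ^ (2 * a) * n₀ ^ 2) with hx
  have hinit : x 1 - ((κ * p ^ (lamb + 2) : ℤ) : K) * x 0 ∈ vZero v := by
    have h := hrec n₀ hn₀ hn₀6
    rw [jacobiSym_twelve_mul_sq_of_not_dvd hp hp6 hpn₀, ← hκdef, if_neg hpn₀] at h
    convert (vCong_iff_sub_mem v).1 h using 1
    simp only [hx, mul_one, mul_zero, pow_zero, one_mul, mul_comm (n₀ ^ 2)]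
    push_cast
    ring
  have hstep : ∀ a, x (a + 2) -
      (((κ * p ^ (lamb + 2) : ℤ) : K) + ((κ * p ^ (lamb + 1) : ℤ) : K)) * x (a + 1) +
      ((κ * p ^ (lamb + 2) : ℤ) : K) * ((κ * p ^ (lamb + 1) : ℤ) : K) * x a ∈ vZero v := by
    intro a
    have hdvd : p ∣ p ^ (a + 1) * n₀ := dvd_mul_of_dvd_left (dvd_pow_self p a.succ_ne_zero) n₀
    have h := hrec (p ^ (a + 1) * n₀) (Nat.mul_pos (pow_pos hp.pos _) hn₀)
      (Nat.Coprime.mul_left (hp6.pow_left _) hn₀6)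
    rw [jacobiSym_twelve_mul_sq_of_dvd hp hdvd, if_pos hdvd,
      show p ^ (a + 1) * n₀ / p = p ^ a * n₀ by
        rw [pow_succ', mul_assoc, Nat.mul_div_cancel_left _ hp.pos],
      show (p ^ (a + 1) * n₀) ^ 2 * p ^ 2 = p ^ (2 * (a + 2)) * n₀ ^ 2 by ring,
      show (p ^ (a + 1) * n₀) ^ 2 = p ^ (2 * (a + 1)) * n₀ ^ 2 by ring,
      show (p ^ a * n₀) ^ 2 = p ^ (2 * a) * n₀ ^ 2 by ring] at h
    convert (vCong_iff_sub_mem v).1 h using 1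
    push_cast
    linear_combination ((p : K) ^ (2 * lamb + 3) * x a) * hκ
  have key := sub_pow_mul_mem_of_recurrence (vZero v) _ (κ * p ^ (lamb + 1)) x hinit hstep a
  convert (vCong_iff_sub_mem v).2 key using 2
  · push_cast
    ring
  · simp [hx]

/-- the Hecke recursion propagates along powers of `p`. -/
theorem stmt15 (ℓ : ℕ) (hℓ : ℓ.Prime) (hℓ5 : 5 ≤ ℓ)
    {K : Type*} [Field K] [NumberField K]
    (v : Ideal (𝓞 K)) (hv : v.IsMaximal) (hℓv : (ℓ : 𝓞 K) ∈ v)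
    (lamb : ℕ) (p : ℕ) (hp : p.Prime) (hp5 : 5 ≤ p) (hp0 : p % ℓ ≠ 0) (hp1 : p % ℓ ≠ 1)
    (c : ℕ → K) (hcint : ∀ n, VInt v (c n))
    (hrec : ∀ n : ℕ, 1 ≤ n → Nat.gcd n 6 = 1 →
      VCong v
        (c (n ^ 2 * p ^ 2) +
          (p : K) ^ (lamb + 1) * ((jacobiSym (12 * (n : ℤ) ^ 2) p : ℤ) : K) * c (n ^ 2) +
          (p : K) ^ (2 * lamb + 3) * (if p ∣ n then c ((n / p) ^ 2) else 0))
        (((kron12 (p : ℤ) : ℤ) : K) * ((p : K) ^ (lamb + 2) + (p : K) ^ (lamb + 1)) *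
          c (n ^ 2))) :
    ∀ n₀ : ℕ, 1 ≤ n₀ → Nat.gcd n₀ 6 = 1 → ¬ p ∣ n₀ → ∀ a : ℕ,
      VCong v (c (p ^ (2 * a) * n₀ ^ 2))
        (((kron12 (p : ℤ) : ℤ) : K) ^ a * (p : K) ^ (a * (lamb + 2)) * c (n₀ ^ 2)) :=
  stmt15_general v hv lamb p hp hp5 c hrec
end
end
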